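/- arXiv:2603.00196 — 3 statements merged into one kernel-verified Lean document; each statement's English description precedes it below -/
import Mathlib

section
/- Let m = (m₁, …, m_N) have i.i.d. coordinates uniform on [−λ/2, λ/2], and let e₁, e₂ ∈ ℝ^N with δ = e₁ − e₂. Then the total variation distance between the distributions of e₁ + m and e₂ + m equals 1 − ∏_{i=1}^N max(1 − |δ_i|/λ, 0). -/
/-
Each shifted law is the normalized Lebesgue measure `volume[|B]` on a box `B` of side `λ`.
For normalized measures on two sets `A`, `B` of equal finite volume, `ρ[|A]` is dominated
by `ρ[|B]` on `B`, so `ρ[|A] s - ρ[|B] s ≤ ρ[|A] Bᶜ = 1 - ρ[|A] B`, with equality at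
`s = Bᶜ`.
The overlap `ρ[|A] B` of two boxes factorizes over the coordinates, and in coordinate `i`
the two intervals of length `λ` overlap in an interval of length `max (λ - |δ i|) 0`.
-/

open MeasureTheory

/-- Total variation distance between two measures, as the supremum over
measurable sets of the discrepancy of their (real-valued) masses. -/
noncomputable def tvDist {α : Type*} [MeasurableSpace α] (μ ν : Measure α) : ℝ :=
  ⨆ s : {s : Set α // MeasurableSet s}, |(μ s.1).toReal - (ν s.1).toReal|

open ProbabilityTheory Set
open scoped ENNReal

section

variable {α : Type*} [MeasurableSpace α]

lemma measureReal_sub_measureReal_le_of_restrict_le {P Q : Measure α}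
    [IsProbabilityMeasure P] [IsFiniteMeasure Q] {B : Set α} (hB : MeasurableSet B)
    (hPQ : P.restrict B ≤ Q) (s : Set α) :
    P.real s - Q.real s ≤ 1 - P.real B := by
  have hinter : P.real (s ∩ B) ≤ Q.real s := by
    rw [measureReal_def, measureReal_def, ← Measure.restrict_apply' hB]
    exact ENNReal.toReal_mono (measure_ne_top Q s) (hPQ s)
  have hdiff : P.real (s \ B) ≤ P.real Bᶜ := measureReal_mono fun x hx => hx.2
  rw [← measureReal_inter_add_sdiff hB, ← probReal_compl_eq_one_sub hB]
  linarith

lemma ProbabilityTheory.cond_restrict_le_cond {ρ : Measure α} {A B : Set α}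
    (hB : MeasurableSet B) (hAB : ρ B ≤ ρ A) : (ρ[|A]).restrict B ≤ ρ[|B] := by
  rw [ProbabilityTheory.cond, ProbabilityTheory.cond, Measure.restrict_smul,
    Measure.restrict_restrict hB]
  gcongr
  exact inter_subset_left

lemma tvDist_cond_eq_one_sub {ρ : Measure α} {A B : Set α} (hA : MeasurableSet A)
    (hB : MeasurableSet B) (hAB : ρ A = ρ B) (h0 : ρ A ≠ 0) (htop : ρ A ≠ ∞) :
    tvDist ρ[|A] ρ[|B] = 1 - (ρ[|A]).real B := by
  have := cond_isProbabilityMeasure_of_finite h0 htop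
  have := cond_isProbabilityMeasure_of_finite (hAB ▸ h0) (hAB ▸ htop)
  have hsymm : (ρ[|B]).real A = (ρ[|A]).real B := by
    rw [measureReal_def, measureReal_def, cond_apply hA, cond_apply hB, hAB, inter_comm]
  have hle : ∀ s, |(ρ[|A]).real s - (ρ[|B]).real s| ≤ 1 - (ρ[|A]).real B := fun s => by
    rw [abs_sub_le_iff]
    constructor
    · exact measureReal_sub_measureReal_le_of_restrict_le hB
        (cond_restrict_le_cond hB hAB.ge) s
    · rw [← hsymm]
      exact measureReal_sub_measureReal_le_of_restrict_le hA
        (cond_restrict_le_cond hA hAB.le) s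
  have hBc : (ρ[|B]).real Bᶜ = 0 := by
    rw [measureReal_def, cond_apply hB, inter_compl_self, measure_empty, mul_zero,
      ENNReal.toReal_zero]
  have hattained : |(ρ[|A]).real Bᶜ - (ρ[|B]).real Bᶜ| = 1 - (ρ[|A]).real B := by
    rw [hBc, sub_zero, probReal_compl_eq_one_sub hB, abs_of_nonneg (by simp)]
  exact IsLUB.ciSup_eq ⟨fun _ ⟨s, hs⟩ => hs ▸ hle s.1,
    fun _ hd => hattained ▸ hd ⟨⟨Bᶜ, hB.compl⟩, rfl⟩⟩

end

lemma MeasureTheory.MeasurePreserving.map_cond_preimage {α β : Type*} [MeasurableSpace α]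
    [MeasurableSpace β] {ρ : Measure α} {ρ' : Measure β} {f : α → β}
    (hf : MeasurePreserving f ρ ρ') {t : Set β} (ht : MeasurableSet t) :
    (ρ[|f ⁻¹' t]).map f = ρ'[|t] := by
  rw [ProbabilityTheory.cond, ProbabilityTheory.cond, Measure.map_smul,
    ← Measure.restrict_map hf.measurable ht, hf.map_eq, hf.measure_preimage ht.nullMeasurableSet]

lemma MeasureTheory.Measure.pi_cond {ι : Type*} [Fintype ι] {α : ι → Type*}
    [∀ i, MeasurableSpace (α i)] {μ : ∀ i, Measure (α i)} [∀ i, SigmaFinite (μ i)]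
    {s : ∀ i, Set (α i)} (hs : ∀ i, μ i (s i) ≠ ∞) :
    Measure.pi (fun i => (μ i)[|s i]) = (Measure.pi μ)[|univ.pi s] := by
  refine Measure.pi_eq fun t ht => ?_
  rw [cond_apply' (MeasurableSet.univ_pi ht), ← pi_inter_distrib, Measure.pi_pi, Measure.pi_pi,
    ENNReal.prod_inv_distrib fun i _ j _ _ => Or.inr (hs j), ← Finset.prod_mul_distrib]
  exact Finset.prod_congr rfl fun i _ => (cond_apply' (ht i) _).symm

lemma MeasureTheory.Measure.pi_real_pi {ι : Type*} [Fintype ι] {α : ι → Type*}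
    [∀ i, MeasurableSpace (α i)] (μ : ∀ i, Measure (α i)) [∀ i, SigmaFinite (μ i)]
    (s : ∀ i, Set (α i)) : (Measure.pi μ).real (univ.pi s) = ∏ i, (μ i).real (s i) := by
  simp only [measureReal_def, Measure.pi_pi, ENNReal.toReal_prod]

lemma Real.cond_Icc_real_Icc {l : ℝ} (hl : 0 < l) (a b : ℝ) :
    (volume[|Icc (a - l / 2) (a + l / 2)]).real (Icc (b - l / 2) (b + l / 2)) =
      max (1 - |a - b| / l) 0 := by
  have hwidth : (a + l / 2) ⊓ (b + l / 2) - (a - l / 2) ⊔ (b - l / 2) = l - |a - b| := by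
    rw [min_add_add_right, max_sub_sub_right, ← max_sub_min_eq_abs']
    ring
  rw [measureReal_def, cond_apply measurableSet_Icc, Icc_inter_Icc, Real.volume_Icc,
    Real.volume_Icc, hwidth, ENNReal.toReal_mul, ENNReal.toReal_inv, ENNReal.toReal_ofReal',
    ENNReal.toReal_ofReal', add_sub_sub_cancel, add_halves, max_eq_left hl.le, ← div_eq_inv_mul,
    ← max_div_div_right hl.le, zero_div, sub_div, div_self hl.ne']

lemma Real.map_const_add_pi_cond_Icc {ι : Type*} [Fintype ι] (l : ℝ) (e : ι → ℝ) :
    (Measure.pi fun _ : ι => volume[|Icc (-(l / 2)) (l / 2)]).map (e + ·) =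
      Measure.pi fun i => volume[|Icc (e i - l / 2) (e i + l / 2)] := by
  have hcoord : ∀ i, (volume[|Icc (-(l / 2)) (l / 2)]).map (e i + ·) =
      volume[|Icc (e i - l / 2) (e i + l / 2)] := fun i => by
    have hpre : (e i + ·) ⁻¹' Icc (e i - l / 2) (e i + l / 2) = Icc (-(l / 2)) (l / 2) := by
      rw [preimage_const_add_Icc, sub_sub_cancel_left, add_sub_cancel_left]
    rw [← hpre]
    exact (measurePreserving_add_left volume (e i)).map_cond_preimage measurableSet_Icc
  rw [← funext hcoord]
  exact Measure.pi_map_pi fun i => (measurable_const_add (e i)).aemeasurable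

theorem tv_product_shifted_uniform_general {N : ℕ} (lam : ℝ) (hlam : 0 < lam)
    (μ : Measure ℝ)
    (hμ : μ = (ENNReal.ofReal lam)⁻¹ • volume.restrict (Set.Icc (-(lam/2)) (lam/2)))
    (e₁ e₂ δ : Fin N → ℝ) (hδ : δ = e₁ - e₂) :
    tvDist (Measure.map (fun m => e₁ + m) (Measure.pi fun _ : Fin N => μ))
           (Measure.map (fun m => e₂ + m) (Measure.pi fun _ : Fin N => μ)) =
      1 - ∏ i : Fin N, max (1 - |δ i| / lam) 0 := by
  have hμ_cond : μ = volume[|Icc (-(lam / 2)) (lam / 2)] := by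
    rw [hμ, ProbabilityTheory.cond, Real.volume_Icc, sub_neg_eq_add, add_halves]
  have hside (a : ℝ) : volume (Icc (a - lam / 2) (a + lam / 2)) = ENNReal.ofReal lam := by
    rw [Real.volume_Icc, add_sub_sub_cancel, add_halves]
  have hbox (e : Fin N → ℝ) : volume (univ.pi fun i => Icc (e i - lam / 2) (e i + lam / 2)) =
      ∏ _i : Fin N, ENNReal.ofReal lam := by
    simp only [volume_pi_pi, hside]
  have hfin (e : Fin N → ℝ) (i : Fin N) : volume (Icc (e i - lam / 2) (e i + lam / 2)) ≠ ∞ := by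
    simp
  rw [hμ_cond, Real.map_const_add_pi_cond_Icc, Real.map_const_add_pi_cond_Icc,
    Measure.pi_cond (hfin e₁), Measure.pi_cond (hfin e₂), ← volume_pi,
    tvDist_cond_eq_one_sub (.univ_pi fun _ => measurableSet_Icc)
      (.univ_pi fun _ => measurableSet_Icc) (by rw [hbox, hbox]) (by rw [hbox]; simp [hlam])
      (by rw [hbox]; simp),
    volume_pi, ← Measure.pi_cond (hfin e₁), Measure.pi_real_pi, hδ]
  simp only [Real.cond_Icc_real_Icc hlam, Pi.sub_apply]

theorem tv_product_shifted_uniform {N : ℕ} (lam : ℝ) (hlam : 0 < lam)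
    (μ : Measure ℝ) [IsProbabilityMeasure μ]
    (hμ : μ = (ENNReal.ofReal lam)⁻¹ • volume.restrict (Set.Icc (-(lam/2)) (lam/2)))
    (e₁ e₂ δ : Fin N → ℝ) (hδ : δ = e₁ - e₂) :
    tvDist (Measure.map (fun m => e₁ + m) (Measure.pi fun _ : Fin N => μ))
           (Measure.map (fun m => e₂ + m) (Measure.pi fun _ : Fin N => μ)) =
      1 - ∏ i : Fin N, max (1 - |δ i| / lam) 0 :=
  tv_product_shifted_uniform_general lam hlam μ hμ e₁ e₂ δ hδ
end

section
/- Let m ∈ ℝ^N have i.i.d. coordinates uniform on [−λ/2, λ/2] and e₁, e₂ ∈ ℝ^N. Then the total variation distance between the distributions of e₁ + m and e₂ + m is at most min(‖e₁ − e₂‖₁ / λ, 1). -/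
open MeasureTheory

/-!
Write `μ ≤ ν + ρ` with `ρ` of small total mass. For the uniform law on an interval and its
translate by `d`, `ρ` can be taken to be the restriction to the part of the first interval not
covered by the second, of mass at most `|d| / λ`. Such dominations tensorize with additive
remainder masses: `μ₁ ⊗ μ₂ ≤ μ₁ ⊗ (ν₂ + ρ₂) ≤ (ν₁ + ρ₁) ⊗ ν₂ + μ₁ ⊗ ρ₂`. Hence the translated
product laws satisfy `P₁ s ≤ P₂ s + ‖e₁ - e₂‖₁ / λ` for every `s`, and symmetrically.
-/

open Set
open scoped ENNReal

namespace MeasureTheory.Measure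

variable {α β : Type*} [MeasurableSpace α] [MeasurableSpace β]

/-- One-sided total variation: for probability measures, `excess μ ν = tvDist μ ν`. -/
noncomputable def excess (μ ν : Measure α) : ℝ≥0∞ :=
  ⨅ (ρ : Measure α) (_ : μ ≤ ν + ρ), ρ univ

lemma excess_le_of_le_add {μ ν ρ : Measure α} (h : μ ≤ ν + ρ) : excess μ ν ≤ ρ univ :=
  iInf₂_le ρ h

lemma apply_le_add_excess (μ ν : Measure α) (s : Set α) : μ s ≤ ν s + excess μ ν := by
  simp_rw [excess, ENNReal.add_iInf]
  refine le_iInf₂ fun ρ h => ?_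
  calc μ s ≤ (ν + ρ) s := h s
    _ ≤ ν s + ρ univ := add_le_add_right (measure_mono (subset_univ s)) _

lemma excess_self (μ : Measure α) : excess μ μ = 0 :=
  nonpos_iff_eq_zero.1 <| by simpa using excess_le_of_le_add (ν := μ) (ρ := 0) (by simp)

lemma excess_map_le {μ ν : Measure α} {f : α → β} (hf : Measurable f) :
    excess (μ.map f) (ν.map f) ≤ excess μ ν := by
  refine le_iInf₂ fun ρ h => ?_
  calc excess (μ.map f) (ν.map f) ≤ ρ.map f univ := by
        refine excess_le_of_le_add ?_
        rw [← Measure.map_add _ _ hf]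
        exact map_mono h hf
    _ = ρ univ := by rw [map_apply hf MeasurableSet.univ, preimage_univ]

lemma excess_smul_restrict_le (c : ℝ≥0∞) (μ : Measure α) (s : Set α) {t : Set α}
    (ht : MeasurableSet t) :
    excess (c • μ.restrict s) (c • μ.restrict t) ≤ c * μ (s \ t) := by
  calc excess (c • μ.restrict s) (c • μ.restrict t) ≤ (c • μ.restrict (s \ t)) univ := by
        refine excess_le_of_le_add ?_
        rw [← smul_add, ← restrict_inter_add_sdiff s ht]
        gcongr
        exact inter_subset_right
    _ = c * μ (s \ t) := by rw [smul_apply, restrict_apply_univ, smul_eq_mul]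

lemma excess_prod_le {μ₁ ν₁ : Measure α} {μ₂ ν₂ : Measure β} [IsProbabilityMeasure μ₁]
    [SFinite ν₁] [IsProbabilityMeasure ν₂] :
    excess (μ₁.prod μ₂) (ν₁.prod ν₂) ≤ excess μ₁ ν₁ + excess μ₂ ν₂ := by
  refine ENNReal.le_iInf₂_add_iInf₂ fun ρ₁ h₁ ρ₂ h₂ => ?_
  rcases eq_top_or_lt_top (ρ₁ univ) with hρ₁ | hρ₁
  · simp [hρ₁]
  rcases eq_top_or_lt_top (ρ₂ univ) with hρ₂ | hρ₂
  · simp [hρ₂]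
  have : IsFiniteMeasure ρ₁ := ⟨hρ₁⟩
  have : IsFiniteMeasure ρ₂ := ⟨hρ₂⟩
  calc excess (μ₁.prod μ₂) (ν₁.prod ν₂) ≤ (ρ₁.prod ν₂ + μ₁.prod ρ₂) univ := by
        refine excess_le_of_le_add ?_
        calc μ₁.prod μ₂ ≤ μ₁.prod (ν₂ + ρ₂) := prod_mono le_rfl h₂
          _ ≤ (ν₁ + ρ₁).prod ν₂ + μ₁.prod ρ₂ := by
            rw [prod_add]; gcongr
          _ = ν₁.prod ν₂ + (ρ₁.prod ν₂ + μ₁.prod ρ₂) := by rw [add_prod, add_assoc]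
    _ = ρ₁ univ + ρ₂ univ := by
        rw [add_apply, ← univ_prod_univ, prod_prod, prod_prod]; simp

lemma excess_pi_le {n : ℕ} {α : Fin n → Type*} [∀ i, MeasurableSpace (α i)]
    (μ ν : ∀ i, Measure (α i)) [∀ i, IsProbabilityMeasure (μ i)]
    [∀ i, IsProbabilityMeasure (ν i)] :
    excess (Measure.pi μ) (Measure.pi ν) ≤ ∑ i, excess (μ i) (ν i) := by
  induction n with
  | zero => simp [pi_of_empty μ, pi_of_empty ν, excess_self]
  | succ n ih =>
    set e := MeasurableEquiv.piFinSuccAbove α 0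
    rw [← ((measurePreserving_piFinSuccAbove μ 0).symm e).map_eq,
      ← ((measurePreserving_piFinSuccAbove ν 0).symm e).map_eq, Fin.sum_univ_succAbove _ 0]
    calc _ ≤ excess ((μ 0).prod (Measure.pi fun j => μ (Fin.succAbove 0 j)))
          ((ν 0).prod (Measure.pi fun j => ν (Fin.succAbove 0 j))) :=
          excess_map_le e.symm.measurable
      _ ≤ _ := excess_prod_le
      _ ≤ _ := add_le_add_right (ih _ _) _

end MeasureTheory.Measure

open Measure

lemma Real.volume_Icc_add_sdiff_le (a b p q : ℝ) :
    volume (Icc (a + p) (a + q) \ Icc (b + p) (b + q)) ≤ ENNReal.ofReal |a - b| := by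
  rcases le_total a b with hab | hba
  · calc _ ≤ volume (Ico (a + p) (b + p)) := by
          refine measure_mono fun x ⟨⟨hax, hxa⟩, hxb⟩ => ⟨hax, ?_⟩
          by_contra h
          exact hxb ⟨not_lt.1 h, by linarith⟩
      _ = ENNReal.ofReal |a - b| := by
          rw [Real.volume_Ico, abs_sub_comm, abs_of_nonneg (by linarith)]
          ring_nf
  · calc _ ≤ volume (Ioc (b + q) (a + q)) := by
          refine measure_mono fun x ⟨⟨hax, hxa⟩, hxb⟩ => ⟨?_, hxa⟩
          by_contra h
          exact hxb ⟨by linarith, not_lt.1 h⟩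
      _ = ENNReal.ofReal |a - b| := by
          rw [Real.volume_Ioc, abs_of_nonneg (by linarith)]
          ring_nf

lemma excess_map_const_add_smul_restrict_Icc_le (c : ℝ≥0∞) (a b p q : ℝ) :
    excess ((c • volume.restrict (Icc p q)).map (a + ·))
      ((c • volume.restrict (Icc p q)).map (b + ·)) ≤ c * ENNReal.ofReal |a - b| := by
  have hshift (x : ℝ) :
      (volume.restrict (Icc p q)).map (x + ·) = volume.restrict (Icc (x + p) (x + q)) := by
    rw [((measurePreserving_add_left volume x).restrict_image_emb
      (measurableEmbedding_addLeft x) _).map_eq, image_const_add_Icc]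
  rw [Measure.map_smul, Measure.map_smul, hshift, hshift]
  calc _ ≤ c * volume (Icc (a + p) (a + q) \ Icc (b + p) (b + q)) :=
        excess_smul_restrict_le c _ _ measurableSet_Icc
    _ ≤ c * ENNReal.ofReal |a - b| := by gcongr; exact Real.volume_Icc_add_sdiff_le a b p q

lemma tvDist_le_one {α : Type*} [MeasurableSpace α] (μ ν : Measure α) [IsProbabilityMeasure μ]
    [IsProbabilityMeasure ν] : tvDist μ ν ≤ 1 :=
  ciSup_le fun _ => abs_sub_le_of_nonneg_of_le ENNReal.toReal_nonneg measureReal_le_one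
    ENNReal.toReal_nonneg measureReal_le_one

lemma toReal_apply_le_add_of_excess_le {α : Type*} [MeasurableSpace α] {μ ν : Measure α}
    [IsFiniteMeasure ν] {ε : ℝ} (hε : 0 ≤ ε) (h : excess μ ν ≤ ENNReal.ofReal ε) (s : Set α) :
    (μ s).toReal ≤ (ν s).toReal + ε := by
  have := ENNReal.toReal_le_add ((apply_le_add_excess μ ν s).trans (add_le_add_right h _))
    (measure_ne_top ν s) ENNReal.ofReal_ne_top
  rwa [ENNReal.toReal_ofReal hε] at this

lemma tvDist_le_of_excess_le {α : Type*} [MeasurableSpace α] {μ ν : Measure α} [IsFiniteMeasure μ]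
    [IsFiniteMeasure ν] {ε : ℝ} (hε : 0 ≤ ε) (hμν : excess μ ν ≤ ENNReal.ofReal ε)
    (hνμ : excess ν μ ≤ ENNReal.ofReal ε) : tvDist μ ν ≤ ε :=
  ciSup_le fun s => abs_sub_le_iff.2
    ⟨sub_le_iff_le_add'.2 (toReal_apply_le_add_of_excess_le hε hμν s.1),
      sub_le_iff_le_add'.2 (toReal_apply_le_add_of_excess_le hε hνμ s.1)⟩

theorem tv_masked_l1_bound {N : ℕ} (lam : ℝ) (hlam : 0 < lam)
    (μ : Measure ℝ) [IsProbabilityMeasure μ]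
    (hμ : μ = (ENNReal.ofReal lam)⁻¹ • volume.restrict (Set.Icc (-(lam/2)) (lam/2)))
    (e₁ e₂ : Fin N → ℝ) :
    tvDist (Measure.map (fun m => e₁ + m) (Measure.pi fun _ : Fin N => μ))
           (Measure.map (fun m => e₂ + m) (Measure.pi fun _ : Fin N => μ)) ≤
      min ((∑ i : Fin N, |e₁ i - e₂ i|) / lam) 1 := by
  have (a : ℝ) : IsProbabilityMeasure (μ.map (a + ·)) :=
    isProbabilityMeasure_map (measurable_const_add a).aemeasurable
  have hshift (e : Fin N → ℝ) :
      (Measure.pi fun _ : Fin N => μ).map (e + ·) = Measure.pi fun i => μ.map (e i + ·) :=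
    pi_map_pi fun i => (measurable_const_add (e i)).aemeasurable
  have hexcess (e e' : Fin N → ℝ) :
      excess (Measure.pi fun i => μ.map (e i + ·)) (Measure.pi fun i => μ.map (e' i + ·)) ≤
        ENNReal.ofReal ((∑ i, |e i - e' i|) / lam) := by
    refine (excess_pi_le _ _).trans ?_
    rw [Finset.sum_div, ENNReal.ofReal_sum_of_nonneg fun i _ => by positivity]
    gcongr with i
    rw [hμ, div_eq_inv_mul |e i - e' i|, ENNReal.ofReal_mul (by positivity),
      ENNReal.ofReal_inv_of_pos hlam]
    exact excess_map_const_add_smul_restrict_Icc_le _ _ _ _ _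
  rw [hshift, hshift]
  refine le_min (tvDist_le_of_excess_le (by positivity) (hexcess e₁ e₂) ?_) (tvDist_le_one _ _)
  simpa only [abs_sub_comm] using hexcess e₂ e₁
end

section
/- Let m ∈ ℝ^N have i.i.d. uniform coordinates on [−λ/2, λ/2] and e₁, e₂ ∈ ℝ^N. An adversary observing ê = e_b + m (b uniform on {1,2}) guesses b correctly with probability at most 1/2 + (1/2)·min(‖e₁ − e₂‖₁/λ, 1). -/
/-!
Couple the two observations through the mask: rotating each coordinate `m i` of the mask by
`δ i = e₂ i - e₁ i` modulo `λ` inside `(-λ/2, λ/2]` is a rotation of the circle `ℝ/λℤ`, hence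
preserves the uniform law, and it turns `e₁ + m` into `e₂ + m` unless some coordinate wraps
around, which happens with probability at most `∑ |δ i| / λ`. So every event `A` satisfies
`P₁(A) ≤ P₂(A) + ‖e₁ - e₂‖₁ / λ`, and the success probability of the test "guess 1 on `A`" is
`(P₁(A) + 1 - P₂(A)) / 2`.
-/

open MeasureTheory Set

namespace MeasureTheory

theorem Measure.map_apply_le_map_apply_add {α β : Type*} [MeasurableSpace α]
    [MeasurableSpace β] (π : Measure α) {f g : α → β} (hf : Measurable f) (hg : Measurable g)
    {E : Set α} (hfg : EqOn f g Eᶜ) {A : Set β} (hA : MeasurableSet A) :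
    π.map f A ≤ π.map g A + π E := by
  rw [Measure.map_apply hf hA, Measure.map_apply hg hA]
  refine (measure_mono fun x hx => ?_).trans (measure_union_le _ _)
  by_cases hxE : x ∈ E
  · exact Or.inr hxE
  · exact Or.inl (show g x ∈ A from hfg hxE ▸ hx)

theorem Measure.pi_exists_mem_le {ι : Type*} [Fintype ι] {α : ι → Type*}
    [∀ i, MeasurableSpace (α i)] (μ : ∀ i, Measure (α i)) [∀ i, IsProbabilityMeasure (μ i)]
    (E : ∀ i, Set (α i)) :
    Measure.pi μ {x | ∃ i, x i ∈ E i} ≤ ∑ i, μ i (E i) := by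
  rw [ofPred_exists]
  refine (measure_iUnion_fintype_le _ _).trans (Finset.sum_le_sum fun i _ => ?_)
  rw [← (measurePreserving_eval μ i).map_eq]
  exact Measure.le_map_apply (measurable_pi_apply i).aemeasurable _

theorem toReal_add_toReal_compl_le_one_add_min {α : Type*} [MeasurableSpace α]
    (P Q : Measure α) [IsProbabilityMeasure P] [IsProbabilityMeasure Q] {A : Set α}
    (hA : MeasurableSet A) {s : ℝ} (hs : 0 ≤ s) (hPQ : P A ≤ Q A + ENNReal.ofReal s) :
    (P A).toReal + (Q Aᶜ).toReal ≤ 1 + min s 1 := by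
  have hQc : (Q Aᶜ).toReal = 1 - (Q A).toReal := by
    rw [prob_compl_eq_one_sub hA, ENNReal.toReal_sub_of_le prob_le_one ENNReal.one_ne_top,
      ENNReal.toReal_one]
  have hP : (P A).toReal ≤ (Q A).toReal + s := by
    have := ENNReal.toReal_mono (by finiteness) hPQ
    rwa [ENNReal.toReal_add (measure_ne_top _ _) ENNReal.ofReal_ne_top,
      ENNReal.toReal_ofReal hs] at this
  have hP1 : (P A).toReal ≤ 1 := by
    simpa using ENNReal.toReal_mono ENNReal.one_ne_top prob_le_one
  have hQ0 : 0 ≤ (Q A).toReal := ENNReal.toReal_nonneg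
  rw [hQc]
  rcases min_choice s 1 with h | h <;> rw [h] <;> linarith

end MeasureTheory

theorem measurePreserving_toIocMod_add {p : ℝ} (hp : 0 < p) (a d : ℝ) :
    MeasurePreserving (fun x => toIocMod hp a (x + d))
      (volume.restrict (Ioc a (a + p))) (volume.restrict (Ioc a (a + p))) := by
  have : Fact (0 < p) := ⟨hp⟩
  have hrepr := (measurePreserving_subtype_coe measurableSet_Ioc).comp
    (AddCircle.measurePreserving_equivIoc p (a := a))
  have hrot := measurePreserving_add_right (volume : Measure (AddCircle p)) (d : AddCircle p)
  convert hrepr.comp (hrot.comp (AddCircle.measurePreserving_mk p a)) using 1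
  funext x
  simp only [Function.comp_apply, ← AddCircle.coe_add]
  rw [AddCircle.equivIoc, QuotientAddGroup.equivIocMod_coe]

theorem volume_Ioc_inter_add_notMem_Ioc_le (a b d : ℝ) :
    volume (Ioc a b ∩ {x | x + d ∉ Ioc a b}) ≤ ENNReal.ofReal |d| := by
  have hcover : Ioc a b ∩ {x | x + d ∉ Ioc a b} ⊆ Icc a (a - d) ∪ Ioc (b - d) b := by
    rintro x ⟨hx, hxd⟩
    simp only [mem_ofPred_eq, mem_Ioc, not_and_or, not_lt, not_le] at hxd
    rcases hxd with h | h
    · exact Or.inl ⟨hx.1.le, by linarith⟩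
    · exact Or.inr ⟨by linarith, hx.2⟩
  calc volume (Ioc a b ∩ {x | x + d ∉ Ioc a b})
      ≤ volume (Icc a (a - d)) + volume (Ioc (b - d) b) :=
        (measure_mono hcover).trans (measure_union_le _ _)
    _ = ENNReal.ofReal (-d) + ENNReal.ofReal d := by
        rw [Real.volume_Icc, Real.volume_Ioc]; ring_nf
    _ = ENNReal.ofReal |d| := by
        rcases le_total d 0 with h | h
        · rw [abs_of_nonpos h, ENNReal.ofReal_of_nonpos h, add_zero]
        · rw [abs_of_nonneg h, ENNReal.ofReal_of_nonpos (neg_nonpos.2 h), zero_add]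

noncomputable def uniformIoc (a p : ℝ) : Measure ℝ :=
  (ENNReal.ofReal p)⁻¹ • volume.restrict (Ioc a (a + p))

section uniformIoc

variable {p : ℝ}

theorem isProbabilityMeasure_uniformIoc (hp : 0 < p) (a : ℝ) :
    IsProbabilityMeasure (uniformIoc a p) := by
  constructor
  rw [uniformIoc, Measure.smul_apply, Measure.restrict_apply_univ, Real.volume_Ioc,
    add_sub_cancel_left, smul_eq_mul, ENNReal.inv_mul_cancel (by simpa using hp) (by simp)]

theorem measurePreserving_toIocMod_add_uniformIoc (hp : 0 < p) (a d : ℝ) :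
    MeasurePreserving (fun x => toIocMod hp a (x + d)) (uniformIoc a p) (uniformIoc a p) :=
  (measurePreserving_toIocMod_add hp a d).smul_measure _

theorem uniformIoc_add_notMem_Ioc_le (hp : 0 < p) (a d : ℝ) :
    uniformIoc a p {x | x + d ∉ Ioc a (a + p)} ≤ ENNReal.ofReal (|d| / p) := by
  rw [uniformIoc, Measure.smul_apply, smul_eq_mul, Measure.restrict_apply' measurableSet_Ioc,
    inter_comm, ENNReal.ofReal_div_of_pos hp, ENNReal.div_eq_inv_mul]
  gcongr
  exact volume_Ioc_inter_add_notMem_Ioc_le _ _ _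

theorem pi_uniformIoc_exists_add_notMem_Ioc_le (hp : 0 < p) (a : ℝ) {ι : Type*} [Fintype ι]
    (δ : ι → ℝ) :
    Measure.pi (fun _ : ι => uniformIoc a p) {m | ∃ i, m i + δ i ∉ Ioc a (a + p)} ≤
      ENNReal.ofReal ((∑ i, |δ i|) / p) := by
  have := isProbabilityMeasure_uniformIoc hp a
  calc _ ≤ ∑ i, uniformIoc a p {x | x + δ i ∉ Ioc a (a + p)} := Measure.pi_exists_mem_le _ _
    _ ≤ ∑ i, ENNReal.ofReal (|δ i| / p) :=
        Finset.sum_le_sum fun i _ => uniformIoc_add_notMem_Ioc_le hp a (δ i)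
    _ = _ := by rw [Finset.sum_div, ENNReal.ofReal_sum_of_nonneg fun i _ => by positivity]

theorem map_add_pi_uniformIoc_apply_le (hp : 0 < p) (a : ℝ) {ι : Type*} [Fintype ι]
    (e₁ e₂ : ι → ℝ) {A : Set (ι → ℝ)} (hA : MeasurableSet A) :
    (Measure.pi fun _ : ι => uniformIoc a p).map (e₁ + ·) A ≤
      (Measure.pi fun _ : ι => uniformIoc a p).map (e₂ + ·) A +
        ENNReal.ofReal ((∑ i, |e₁ i - e₂ i|) / p) := by
  have := isProbabilityMeasure_uniformIoc hp a
  set π := Measure.pi fun _ : ι => uniformIoc a p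
  set δ := e₂ - e₁
  set T : (ι → ℝ) → (ι → ℝ) := fun m i => toIocMod hp a (m i + δ i)
  have hT : MeasurePreserving T π π := measurePreserving_pi _ _ fun i =>
    measurePreserving_toIocMod_add_uniformIoc hp a (δ i)
  have hcoupling : EqOn (fun m => e₁ + T m) (e₂ + ·) {m | ∃ i, m i + δ i ∉ Ioc a (a + p)}ᶜ :=
    fun m hm => by
      simp only [mem_compl_iff, mem_ofPred_eq, not_exists, not_not] at hm
      funext i
      change e₁ i + toIocMod hp a (m i + δ i) = e₂ i + m i
      rw [(toIocMod_eq_self hp).2 (hm i)]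
      simp only [δ, Pi.sub_apply]
      ring
  have hcoupled := Measure.map_apply_le_map_apply_add π
    ((measurable_const_add e₁).comp hT.measurable) (measurable_const_add e₂) hcoupling hA
  rw [← Measure.map_map (measurable_const_add e₁) hT.measurable, hT.map_eq] at hcoupled
  refine hcoupled.trans (add_le_add_right ?_ _)
  simpa [δ, abs_sub_comm] using pi_uniformIoc_exists_add_notMem_Ioc_le hp a δ

end uniformIoc

theorem masked_distinguishing_bound_general {N : ℕ} (lam : ℝ) (hlam : 0 < lam)
    (μ : Measure ℝ)
    (hμ : μ = (ENNReal.ofReal lam)⁻¹ • volume.restrict (Set.Icc (-(lam/2)) (lam/2)))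
    (e₁ e₂ : Fin N → ℝ)
    (A : Set (Fin N → ℝ)) (hA : MeasurableSet A) :
    (1/2) * ((Measure.map (fun m => e₁ + m) (Measure.pi fun _ : Fin N => μ) A).toReal +
             (Measure.map (fun m => e₂ + m) (Measure.pi fun _ : Fin N => μ) Aᶜ).toReal) ≤
      1/2 + (1/2) * min ((∑ i : Fin N, |e₁ i - e₂ i|) / lam) 1 := by
  have hμ' : μ = uniformIoc (-(lam / 2)) lam := by
    rw [hμ, uniformIoc, restrict_Ioc_eq_restrict_Icc, show -(lam / 2) + lam = lam / 2 by ring]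
  subst hμ'
  have := isProbabilityMeasure_uniformIoc hlam (-(lam / 2))
  set π := Measure.pi fun _ : Fin N => uniformIoc (-(lam / 2)) lam
  have := Measure.isProbabilityMeasure_map (μ := π) (measurable_const_add e₁).aemeasurable
  have := Measure.isProbabilityMeasure_map (μ := π) (measurable_const_add e₂).aemeasurable
  have hbayes := toReal_add_toReal_compl_le_one_add_min _ _ hA (by positivity)
    (map_add_pi_uniformIoc_apply_le hlam (-(lam / 2)) e₁ e₂ hA)
  linarith

theorem masked_distinguishing_bound {N : ℕ} (lam : ℝ) (hlam : 0 < lam)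
    (μ : Measure ℝ) [IsProbabilityMeasure μ]
    (hμ : μ = (ENNReal.ofReal lam)⁻¹ • volume.restrict (Set.Icc (-(lam/2)) (lam/2)))
    (e₁ e₂ : Fin N → ℝ)
    (A : Set (Fin N → ℝ)) (hA : MeasurableSet A) :
    (1/2) * ((Measure.map (fun m => e₁ + m) (Measure.pi fun _ : Fin N => μ) A).toReal +
             (Measure.map (fun m => e₂ + m) (Measure.pi fun _ : Fin N => μ) Aᶜ).toReal) ≤
      1/2 + (1/2) * min ((∑ i : Fin N, |e₁ i - e₂ i|) / lam) 1 :=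
  masked_distinguishing_bound_general lam hlam μ hμ e₁ e₂ A hA
end
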